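/- Let P0 be a strictly positive probability mass function on a finite set Z, s : Z → ℝ, and c ∈ ℝ with min_z s(z) < c < max_z s(z). Then there exists λ ∈ ℝ such that E_{P_λ}[s] = c, where P_λ(z) = P0(z)exp(λ s(z))/Z(λ). Moreover λ is unique if s is not P0-almost-surely constant. -/

import Mathlib

/-!
Write `Z(λ) = ∑ p_i e^{λ s_i}`, so that the tilted mean is `E(λ) = Z'(λ) / Z(λ)`. It is continuous,
and subtracting `c` from `s` shifts it by `c`. If `s_{i₀} > 0` then for `λ ≥ 0` every term of
`Z'(λ)` is at least `p_i s_i` while the `i₀`-th term grows like `e^{λ s_{i₀}}`, so `E(λ) > 0`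
eventually; applied to `s - c` and to `c - s`, this puts `c` between two values of `E`, and the
intermediate value theorem gives `λ`. Uniqueness: for `a < b`,
`2 (Z'(b) Z(a) - Z'(a) Z(b)) = ∑_{i,j} p_i p_j (s_i - s_j)(e^{b s_i + a s_j} - e^{a s_i + b s_j})`,
a sum of nonnegative terms that is positive as soon as `s` takes two values.
-/

open Finset Real Filter

section TiltedMean

variable {ι : Type*} [Fintype ι]

noncomputable def partitionFn (p s : ι → ℝ) (l : ℝ) : ℝ := ∑ i, p i * exp (l * s i)

noncomputable def tiltedMean (p s : ι → ℝ) (l : ℝ) : ℝ :=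
  (∑ i, p i * exp (l * s i) * s i) / partitionFn p s l

lemma tiltedMean_eq_sum (p s : ι → ℝ) (l : ℝ) :
    tiltedMean p s l = ∑ i, p i * exp (l * s i) / partitionFn p s l * s i := by
  simp only [tiltedMean, Finset.sum_div, div_mul_eq_mul_div]

lemma partitionFn_pos [Nonempty ι] {p : ι → ℝ} (hp : ∀ i, 0 < p i) (s : ι → ℝ) (l : ℝ) :
    0 < partitionFn p s l :=
  sum_pos (fun i _ => mul_pos (hp i) (exp_pos _)) univ_nonempty

lemma continuous_tiltedMean [Nonempty ι] {p : ι → ℝ} (hp : ∀ i, 0 < p i) (s : ι → ℝ) :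
    Continuous (tiltedMean p s) :=
  Continuous.div (by fun_prop) (by unfold partitionFn; fun_prop)
    fun l => (partitionFn_pos hp s l).ne'

lemma tiltedMean_sub_const [Nonempty ι] {p : ι → ℝ} (hp : ∀ i, 0 < p i) (s : ι → ℝ)
    (c l : ℝ) : tiltedMean p (fun i => s i - c) l = tiltedMean p s l - c := by
  have hZ := (partitionFn_pos hp s l).ne'
  have hshift : ∀ i, exp (l * (s i - c)) = exp (-(l * c)) * exp (l * s i) := fun i => by
    rw [← exp_add]; ring_nf
  have hZc : partitionFn p (fun i => s i - c) l = exp (-(l * c)) * partitionFn p s l := by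
    simp only [partitionFn, hshift, mul_sum]
    exact sum_congr rfl fun i _ => by ring
  have hNc : ∑ i, p i * exp (l * (s i - c)) * (s i - c) =
      exp (-(l * c)) * (∑ i, p i * exp (l * s i) * s i - c * partitionFn p s l) := by
    simp only [partitionFn, hshift, mul_sum, ← sum_sub_distrib]
    exact sum_congr rfl fun i _ => by ring
  rw [tiltedMean, tiltedMean, hZc, hNc, mul_div_mul_left _ _ (exp_pos _).ne', sub_div,
    mul_div_cancel_right₀ _ hZ]

lemma tiltedMean_neg (p s : ι → ℝ) (l : ℝ) :
    tiltedMean p (fun i => -s i) l = -tiltedMean p s (-l) := by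
  simp only [tiltedMean, partitionFn, mul_neg, neg_mul, sum_neg_distrib, neg_div]

lemma self_le_exp_mul_mul_self {l t : ℝ} (hl : 0 ≤ l) : t ≤ exp (l * t) * t := by
  rcases le_total 0 t with ht | ht
  · exact le_mul_of_one_le_left ht (one_le_exp (mul_nonneg hl ht))
  · have : exp (l * t) ≤ 1 := exp_le_one_iff.2 (mul_nonpos_of_nonneg_of_nonpos hl ht)
    nlinarith

lemma exists_sum_mul_exp_mul_pos {p s : ι → ℝ} (hp : ∀ i, 0 ≤ p i) {i₀ : ι}
    (hpi₀ : 0 < p i₀) (hsi₀ : 0 < s i₀) : ∃ l, 0 < ∑ i, p i * exp (l * s i) * s i := by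
  have hlower : ∀ l, 0 ≤ l →
      ∑ i, p i * s i + p i₀ * (exp (l * s i₀) * s i₀ - s i₀) ≤
        ∑ i, p i * exp (l * s i) * s i := fun l hl => by
    have hterm : ∀ i, 0 ≤ p i * (exp (l * s i) * s i - s i) := fun i =>
      mul_nonneg (hp i) (sub_nonneg.2 (self_le_exp_mul_mul_self hl))
    have := single_le_sum (fun i _ => hterm i) (mem_univ i₀)
    simp only [mul_sub, sum_sub_distrib] at this
    simp only [mul_assoc] at this ⊢
    linarith
  have htendsto : Tendsto (fun l => ∑ i, p i * s i + p i₀ * (exp (l * s i₀) * s i₀ - s i₀))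
      atTop atTop := by
    refine tendsto_atTop_add_const_left _ _ (Tendsto.const_mul_atTop hpi₀ ?_)
    refine tendsto_atTop_add_const_right _ _ (Tendsto.atTop_mul_const hsi₀ ?_)
    exact tendsto_exp_atTop.comp (tendsto_id.atTop_mul_const hsi₀)
  obtain ⟨l, hl, hpos⟩ := ((eventually_ge_atTop 0).and (htendsto.eventually_gt_atTop 0)).exists
  exact ⟨l, hpos.trans_le (hlower l hl)⟩

lemma exists_lt_tiltedMean [Nonempty ι] {p : ι → ℝ} (hp : ∀ i, 0 < p i) {s : ι → ℝ} {c : ℝ}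
    {i₀ : ι} (h : c < s i₀) : ∃ l, c < tiltedMean p s l := by
  obtain ⟨l, hl⟩ := exists_sum_mul_exp_mul_pos (s := fun i => s i - c) (fun i => (hp i).le)
    (hp i₀) (sub_pos.2 h)
  refine ⟨l, sub_pos.1 ?_⟩
  rw [← tiltedMean_sub_const hp]
  exact div_pos hl (partitionFn_pos hp _ l)

lemma exists_tiltedMean_lt [Nonempty ι] {p : ι → ℝ} (hp : ∀ i, 0 < p i) {s : ι → ℝ} {c : ℝ}
    {i₀ : ι} (h : s i₀ < c) : ∃ l, tiltedMean p s l < c := by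
  obtain ⟨l, hl⟩ := exists_lt_tiltedMean hp (s := fun i => -s i) (neg_lt_neg h)
  rw [tiltedMean_neg] at hl
  exact ⟨-l, neg_lt_neg_iff.1 hl⟩

lemma sub_mul_exp_cross_pos {a b x y : ℝ} (hab : a < b) (hxy : x ≠ y) :
    0 < (x - y) * (exp (b * x + a * y) - exp (a * x + b * y)) := by
  rcases hxy.lt_or_gt with h | h
  · exact mul_pos_of_neg_of_neg (sub_neg.2 h) (sub_neg.2 (exp_lt_exp.2 (by nlinarith)))
  · exact mul_pos (sub_pos.2 h) (sub_pos.2 (exp_lt_exp.2 (by nlinarith)))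

lemma two_mul_cross_sub_eq_sum_sum (p s : ι → ℝ) (a b : ℝ) :
    2 * ((∑ i, p i * exp (b * s i) * s i) * partitionFn p s a -
        (∑ i, p i * exp (a * s i) * s i) * partitionFn p s b) =
      ∑ i, ∑ j, p i * p j * ((s i - s j) * (exp (b * s i + a * s j) - exp (a * s i + b * s j))) := by
  have hexpand : ∀ i j,
      p i * p j * ((s i - s j) * (exp (b * s i + a * s j) - exp (a * s i + b * s j))) =
        p i * exp (b * s i) * s i * (p j * exp (a * s j))
          - p i * exp (b * s i) * (p j * exp (a * s j) * s j)
          - p i * exp (a * s i) * s i * (p j * exp (b * s j))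
          + p i * exp (a * s i) * (p j * exp (b * s j) * s j) := fun i j => by
    simp only [exp_add]; ring
  simp only [hexpand, sum_add_distrib, sum_sub_distrib, ← sum_mul_sum, partitionFn]
  ring

lemma strictMono_tiltedMean {p : ι → ℝ} (hp : ∀ i, 0 < p i) {s : ι → ℝ}
    (hs : ∃ i j, s i ≠ s j) : StrictMono (tiltedMean p s) := by
  obtain ⟨i₀, j₀, hij⟩ := hs
  have : Nonempty ι := ⟨i₀⟩
  intro a b hab
  have hterm : ∀ i j,
      0 ≤ p i * p j * ((s i - s j) * (exp (b * s i + a * s j) - exp (a * s i + b * s j))) :=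
    fun i j => by
      rcases eq_or_ne (s i) (s j) with h | h
      · simp [h]
      · exact (mul_pos (mul_pos (hp i) (hp j)) (sub_mul_exp_cross_pos hab h)).le
  have hsum := sum_pos' (fun i _ => sum_nonneg fun j _ => hterm i j)
    ⟨i₀, mem_univ _, sum_pos' (fun j _ => hterm i₀ j)
      ⟨j₀, mem_univ _, mul_pos (mul_pos (hp i₀) (hp j₀)) (sub_mul_exp_cross_pos hab hij)⟩⟩
  rw [← two_mul_cross_sub_eq_sum_sum] at hsum
  rw [tiltedMean, tiltedMean, div_lt_div_iff₀ (partitionFn_pos hp s a) (partitionFn_pos hp s b)]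
  linarith

end TiltedMean

theorem exists_lambda_matching_moment_general
    {Z : Type*} [Fintype Z] [Nonempty Z]
    (P0 : Z → ℝ) (hpos : ∀ z, 0 < P0 z)
    (s : Z → ℝ) (c : ℝ)
    (hc1 : Finset.univ.inf' Finset.univ_nonempty s < c)
    (hc2 : c < Finset.univ.sup' Finset.univ_nonempty s)
    (E : ℝ → ℝ)
    (hE : ∀ lam, E lam = ∑ z,
      (P0 z * Real.exp (lam * s z) / (∑ z', P0 z' * Real.exp (lam * s z'))) * s z) :
    (∃ lam : ℝ, E lam = c) ∧
    ((∃ z z' : Z, s z ≠ s z') → ∃! lam : ℝ, E lam = c) := by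
  obtain rfl : E = tiltedMean P0 s :=
    funext fun l => (hE l).trans (tiltedMean_eq_sum P0 s l).symm
  obtain ⟨zmin, -, hzmin⟩ := exists_mem_eq_inf' univ_nonempty s
  obtain ⟨zmax, -, hzmax⟩ := exists_mem_eq_sup' univ_nonempty s
  obtain ⟨a, ha⟩ := exists_tiltedMean_lt hpos (hzmin ▸ hc1)
  obtain ⟨b, hb⟩ := exists_lt_tiltedMean hpos (hzmax ▸ hc2)
  obtain ⟨l, -, hl⟩ := intermediate_value_uIcc (continuous_tiltedMean hpos s).continuousOn
    (Set.mem_uIcc.2 (Or.inl ⟨ha.le, hb.le⟩))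
  exact ⟨⟨l, hl⟩, fun hs =>
    ⟨l, hl, fun l' hl' => (strictMono_tiltedMean hpos hs).injective (hl'.trans hl.symm)⟩⟩

theorem exists_lambda_matching_moment
    {Z : Type*} [Fintype Z] [Nonempty Z]
    (P0 : Z → ℝ) (hpos : ∀ z, 0 < P0 z) (hsum : ∑ z, P0 z = 1)
    (s : Z → ℝ) (c : ℝ)
    (hc1 : Finset.univ.inf' Finset.univ_nonempty s < c)
    (hc2 : c < Finset.univ.sup' Finset.univ_nonempty s)
    (E : ℝ → ℝ)
    (hE : ∀ lam, E lam = ∑ z,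
      (P0 z * Real.exp (lam * s z) / (∑ z', P0 z' * Real.exp (lam * s z'))) * s z) :
    (∃ lam : ℝ, E lam = c) ∧
    ((∃ z z' : Z, s z ≠ s z') → ∃! lam : ℝ, E lam = c) :=
  exists_lambda_matching_moment_general P0 hpos s c hc1 hc2 E hE
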